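/- Fix k ≥ 1 and m ≥ 1. Consider symmetric m×m integer matrices whose diagonal entries are taken modulo 2^k and whose off-diagonal entries are taken modulo 2^{k−1}. (i) For any two such matrices R_1, R_2, τ_{R_1}^{(k)} · τ_{R_2}^{(k)} = τ_{R_1 + R_2}^{(k)} (where the sum is reduced modulo 2^k on the diagonal and modulo 2^{k−1} off the diagonal); hence the set of all τ_R^{(k)} is a group under matrix multiplication. (ii) The map γ(τ_R^{(k)}) = R is well-defined and injective on this set: if R_1 and R_2 are two such matrices with τ_{R_1}^{(k)} = τ_{R_2}^{(k)}, then R_1 ≡ R_2 (diagonal entries mod 2^k, off-diagonal entries mod 2^{k−1}). Hence γ is a group isomorphism onto the additive group of such symmetric matrices. -/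

import Mathlib

open Complex Matrix

namespace CliffordHierarchy

noncomputable section

variable {ι : Type*} [Fintype ι] [DecidableEq ι]

/-- Embed a binary vector (entries in `ZMod 2`) into ℤ as a 0/1 vector. -/
def toZ (v : ι → ZMod 2) : ι → ℤ := fun i => ((v i).val : ℤ)

/-- Reduce an integer vector mod 2, viewed in `ZMod 2`. -/
def red2 (a : ι → ℤ) : ι → ZMod 2 := fun i => ((a i : ZMod 2))

/-- Dot product of integer row vectors, over ℤ. -/
def dotZ (x y : ι → ℤ) : ℤ := ∑ i, x i * y i

/-- Bilinear form `x R yᵀ` over ℤ. -/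
def bil (R : Matrix ι ι ℤ) (x y : ι → ℤ) : ℤ := ∑ i, ∑ j, x i * R i j * y j

/-- η(v; R, w) = [(v + w) − (v ∗ w)] R (v ∗ w)ᵀ, with ∗ the entrywise product. -/
def eta (R : Matrix ι ι ℤ) (v w : ι → ℤ) : ℤ := bil R (v + w - v * w) (v * w)

/-- bitwise XOR of 0/1 integer vectors, re-embedded as a 0/1 integer vector. -/
def vxor (v w : ι → ℤ) : ι → ℤ := fun i => v i + w i - 2 * (v i * w i)

/-- ξ_k = exp(2πi/2^k). -/
def xi (k : ℕ) : ℂ := Complex.exp (2 * Real.pi * Complex.I / 2 ^ k)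

/-- τ_R^{(k)} = diag(ξ^{v R vᵀ mod 2^k}), indexed by v ∈ {0,1}^m. -/
def tau (k : ℕ) (R : Matrix ι ι ℤ) : Matrix (ι → ZMod 2) (ι → ZMod 2) ℂ :=
  Matrix.diagonal fun v => xi k ^ (bil R (toZ v) (toZ v) % 2 ^ k)

/-- The Hermitian Pauli matrix E(a,b) extended to integer-vector arguments:
    E(a,b) e_v = i^{a·b mod 4} (−1)^{v·b} e_{v ⊕ a₀}. -/
def EMat (a b : ι → ℤ) : Matrix (ι → ZMod 2) (ι → ZMod 2) ℂ :=
  Matrix.of fun u v =>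
    if u = v + red2 a then Complex.I ^ (dotZ a b % 4) * (-1 : ℂ) ^ dotZ (toZ v) b else 0

/-- 0th binary digit vector of a (componentwise `mod 2`). -/
def dig0 (a : ι → ℤ) : ι → ℤ := fun i => a i % 2

/-- 1st binary digit vector of a. -/
def dig1 (a : ι → ℤ) : ι → ℤ := fun i => (a i / 2) % 2

/-- q^{(k−1)}(v; R, a, b). -/
def qfun (k : ℕ) (R : Matrix ι ι ℤ) (a b v : ι → ℤ) : ℤ :=
  (1 - 2 ^ (k - 2)) * bil R (dig0 a) (dig0 a)
    + 2 ^ (k - 1) * (dotZ (dig0 a) (dig1 b) + dotZ (dig0 b) (dig1 a))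
    + (2 + 2 ^ (k - 1)) * bil R v (dig0 a) - 4 * eta R v (dig0 a)



lemma xi_zpow (k : ℕ) (a : ℤ) :
    xi k ^ a = Complex.exp (a * (2 * Real.pi * Complex.I / 2 ^ k)) := by
  rw [xi, Complex.exp_int_mul]

lemma xi_zpow_eq_iff (k : ℕ) (a b : ℤ) :
    xi k ^ a = xi k ^ b ↔ ((2 : ℤ) ^ k) ∣ (a - b) := by
  rw [xi_zpow, xi_zpow, Complex.exp_eq_exp_iff_exists_int]
  have hc : (2 * (Real.pi : ℂ) * Complex.I) ≠ 0 := by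
    simp [Real.pi_ne_zero, Complex.I_ne_zero, Complex.ofReal_ne_zero]
  have hp : ((2 : ℂ) ^ k) ≠ 0 := pow_ne_zero _ two_ne_zero
  constructor
  · rintro ⟨n, hn⟩
    refine ⟨n, ?_⟩
    have h1 : ((a : ℂ) - b) * (2 * Real.pi * Complex.I)
        = ((2 : ℂ) ^ k * n) * (2 * Real.pi * Complex.I) := by
      field_simp at hn
      linear_combination (2 * (Real.pi : ℂ) * Complex.I) * hn
    have h2 : ((a : ℂ) - b) = (2 : ℂ) ^ k * n := mul_right_cancel₀ hc h1
    exact_mod_cast h2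
  · rintro ⟨n, hn⟩
    refine ⟨n, ?_⟩
    have h2 : ((a : ℂ) - b) = (2 : ℂ) ^ k * n := by exact_mod_cast hn
    rw [mul_comm] at h2
    field_simp
    linear_combination h2

lemma xi_ne_zero (k : ℕ) : xi k ≠ 0 := Complex.exp_ne_zero _

lemma bil_add_matrix (R₁ R₂ : Matrix ι ι ℤ) (x y : ι → ℤ) :
    bil (R₁ + R₂) x y = bil R₁ x y + bil R₂ x y := by
  simp [bil, Matrix.add_apply, mul_add, add_mul, Finset.sum_add_distrib]

lemma bil_add_left (R : Matrix ι ι ℤ) (x y z : ι → ℤ) :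
    bil R (x + y) z = bil R x z + bil R y z := by
  simp [bil, Pi.add_apply, add_mul, Finset.sum_add_distrib]

lemma bil_add_right (R : Matrix ι ι ℤ) (x y z : ι → ℤ) :
    bil R x (y + z) = bil R x y + bil R x z := by
  simp [bil, Pi.add_apply, mul_add, Finset.sum_add_distrib]

/-- Integer standard basis vector. -/
def eZ (i : ι) : ι → ℤ := fun l => if l = i then 1 else 0

lemma bil_eZ (R : Matrix ι ι ℤ) (i j : ι) : bil R (eZ i) (eZ j) = R i j := by
  simp [bil, eZ, ite_mul, mul_ite, Finset.sum_ite_eq, Finset.sum_ite_eq']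

lemma toZ_ind (i : ι) :
    toZ (fun l => if l = i then (1 : ZMod 2) else 0) = eZ i := by
  funext l
  simp only [toZ, eZ]
  split <;> norm_num [ZMod.val_one, ZMod.val_zero]

lemma toZ_pair {i j : ι} (hij : i ≠ j) :
    toZ (fun l => if l = i ∨ l = j then (1 : ZMod 2) else 0) = eZ i + eZ j := by
  funext l
  simp only [toZ, eZ, Pi.add_apply]
  by_cases h1 : l = i
  · subst h1; simp [hij, ZMod.val_one]
  · by_cases h2 : l = j <;> simp [h1, h2, Ne.symm hij, ZMod.val_one, ZMod.val_zero]

lemma emod_modEq (a n : ℤ) : a % n ≡ a [ZMOD n] := Int.emod_emod_of_dvd a dvd_rfl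

theorem stmt16 {m k : ℕ} (hm : 1 ≤ m) (hk : 1 ≤ k) :
    (∀ R₁ R₂ : Matrix (Fin m) (Fin m) ℤ, R₁.IsSymm → R₂.IsSymm →
        tau k R₁ * tau k R₂ = tau k (R₁ + R₂))
    ∧ (∀ R₁ R₂ : Matrix (Fin m) (Fin m) ℤ, R₁.IsSymm → R₂.IsSymm →
        tau k R₁ = tau k R₂ →
        (∀ i, R₁ i i ≡ R₂ i i [ZMOD (2 ^ k)]) ∧
        (∀ i j, i ≠ j → R₁ i j ≡ R₂ i j [ZMOD (2 ^ (k - 1))])) := by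
  constructor
  · intro R₁ R₂ _ _
    unfold tau
    rw [Matrix.diagonal_mul_diagonal]
    refine congrArg Matrix.diagonal (funext fun v => ?_)
    set b₁ := bil R₁ (toZ v) (toZ v)
    set b₂ := bil R₂ (toZ v) (toZ v)
    rw [← zpow_add₀ (xi_ne_zero k), bil_add_matrix, xi_zpow_eq_iff]
    have : b₁ % 2 ^ k + b₂ % 2 ^ k ≡ (b₁ + b₂) % 2 ^ k [ZMOD 2 ^ k] :=
      ((emod_modEq b₁ _).add (emod_modEq b₂ _)).trans (emod_modEq _ _).symm
    exact Int.ModEq.dvd this.symm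
  · intro R₁ R₂ h₁ h₂ htau
    have key : ∀ v : Fin m → ZMod 2,
        ((2 : ℤ) ^ k) ∣ (bil R₂ (toZ v) (toZ v) - bil R₁ (toZ v) (toZ v)) := by
      intro v
      have h := congrFun (congrFun htau v) v
      simp only [tau, Matrix.diagonal_apply_eq] at h
      have hd := (xi_zpow_eq_iff k _ _).mp h
      have : bil R₁ (toZ v) (toZ v) ≡ bil R₂ (toZ v) (toZ v) [ZMOD 2 ^ k] :=
        ((emod_modEq _ _).symm.trans
          ((Int.modEq_iff_dvd.mpr hd).symm.trans (emod_modEq _ _)))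
      exact this.dvd
    have hdiag : ∀ i, ((2 : ℤ) ^ k) ∣ (R₂ i i - R₁ i i) := by
      intro i
      have := key (fun l => if l = i then (1 : ZMod 2) else 0)
      rwa [toZ_ind, bil_eZ, bil_eZ] at this
    refine ⟨fun i => Int.modEq_iff_dvd.mpr (hdiag i), ?_⟩
    intro i j hij
    have hv := key (fun l => if l = i ∨ l = j then (1 : ZMod 2) else 0)
    rw [toZ_pair hij] at hv
    simp only [bil_add_left, bil_add_right, bil_eZ] at hv
    have hji1 : R₁ j i = R₁ i j := h₁.apply i j
    have hji2 : R₂ j i = R₂ i j := h₂.apply i j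
    have h2 : ((2 : ℤ) ^ k) ∣ 2 * (R₂ i j - R₁ i j) := by
      have := dvd_sub (dvd_sub hv (hdiag i)) (hdiag j)
      have e : R₂ i i + R₂ j i + (R₂ i j + R₂ j j) -
          (R₁ i i + R₁ j i + (R₁ i j + R₁ j j)) - (R₂ i i - R₁ i i)
          - (R₂ j j - R₁ j j) = 2 * (R₂ i j - R₁ i j) := by
        rw [hji1, hji2]; ring
      rwa [e] at this
    have hk2 : (2 : ℤ) ^ k = 2 * 2 ^ (k - 1) := by
      rw [← pow_succ']
      congr 1
      omega
    rw [hk2] at h2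
    exact Int.modEq_iff_dvd.mpr ((mul_dvd_mul_iff_left (two_ne_zero)).mp h2)


end

end CliffordHierarchy
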